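/- arXiv:1504.02394 — 3 statements merged into one kernel-verified Lean document; each statement's English description precedes it below -/
import Mathlib

section
/- Let G be a Lie group acting smoothly on M via ρ, with f : N → M smooth, and set F : G × N → M, F(g,p) = g·f(p). If F is a submersion at every point of the form (e, p) with p ∈ N (e the identity of G), then F is a submersion at every point (g, p) of G × N. -/
/-!
The map `F (g, p) = g • f p` is equivariant: `F = (g • ·) ∘ F ∘ ((g⁻¹ • ·) × id)`, and the right
factor sends `(g, p)` to `(1, p)`. The differential of a diffeomorphism is an isomorphism, so
composing with diffeomorphisms on both sides carries surjectivity of `mfderiv F (1, p)` over to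
`mfderiv F (g, p)`.
-/

open Manifold

section

variable {𝕜 : Type*} [NontriviallyNormedField 𝕜]
  {E E' F F' : Type*} [NormedAddCommGroup E] [NormedSpace 𝕜 E] [NormedAddCommGroup E']
  [NormedSpace 𝕜 E'] [NormedAddCommGroup F] [NormedSpace 𝕜 F] [NormedAddCommGroup F']
  [NormedSpace 𝕜 F']
  {H H' K K' : Type*} [TopologicalSpace H] [TopologicalSpace H'] [TopologicalSpace K]
  [TopologicalSpace K']
  {I : ModelWithCorners 𝕜 E H} {I' : ModelWithCorners 𝕜 E' H'}
  {J : ModelWithCorners 𝕜 F K} {J' : ModelWithCorners 𝕜 F' K'}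
  {X X' Y Y' : Type*} [TopologicalSpace X] [ChartedSpace H X] [TopologicalSpace X']
  [ChartedSpace H' X'] [TopologicalSpace Y] [ChartedSpace K Y] [TopologicalSpace Y']
  [ChartedSpace K' Y'] {n : WithTop ℕ∞}

theorem Diffeomorph.surjective_mfderiv_comp_comp (Ψ : Y ≃ₘ^n⟮J, J'⟯ Y') (Φ : X' ≃ₘ^n⟮I', I⟯ X)
    (hn : n ≠ 0) {f : X → Y} {x : X'} (hf : MDifferentiableAt I J f (Φ x))
    (h : Function.Surjective (mfderiv I J f (Φ x))) :
    Function.Surjective (mfderiv I' J' (Ψ ∘ f ∘ Φ) x) := by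
  have hΨ := (Ψ.mdifferentiable hn).mdifferentiableAt (x := f (Φ x))
  have hΦ := (Φ.mdifferentiable hn).mdifferentiableAt (x := x)
  rw [mfderiv_comp x hΨ (hf.comp x hΦ), mfderiv_comp x hf hΦ]
  exact (Ψ.mfderivToContinuousLinearEquiv hn _).surjective.comp
    (h.comp (Φ.mfderivToContinuousLinearEquiv hn x).surjective)

end

theorem submersion_everywhere_of_submersion_at_identity_general
    {EG HG : Type*} [NormedAddCommGroup EG] [NormedSpace ℝ EG] [TopologicalSpace HG]
    (IG : ModelWithCorners ℝ EG HG)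
    {G : Type*} [TopologicalSpace G] [ChartedSpace HG G] [Group G] [LieGroup IG (⊤ : ℕ∞) G]
    {EM HM : Type*} [NormedAddCommGroup EM] [NormedSpace ℝ EM] [TopologicalSpace HM]
    (IM : ModelWithCorners ℝ EM HM)
    {M : Type*} [TopologicalSpace M] [ChartedSpace HM M]
    {EN HN : Type*} [NormedAddCommGroup EN] [NormedSpace ℝ EN] [TopologicalSpace HN]
    (IN : ModelWithCorners ℝ EN HN)
    {N : Type*} [TopologicalSpace N] [ChartedSpace HN N]
    [MulAction G M]
    (hρ : ContMDiff (IG.prod IM) IM (⊤ : ℕ∞) (fun p : G × M => p.1 • p.2))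
    (f : N → M) (hf : ContMDiff IN IM (⊤ : ℕ∞) f)
    (h : ∀ p : N,
      Function.Surjective
        (mfderiv (IG.prod IN) IM (fun p : G × N => p.1 • f p.2) ((1 : G), p))) :
    ∀ q : G × N,
      Function.Surjective (mfderiv (IG.prod IN) IM (fun p : G × N => p.1 • f p.2) q) := by
  rintro ⟨g, p⟩
  have : ContMDiffSMul IG IM (⊤ : ℕ∞) G M := ⟨hρ⟩
  have hF : ContMDiff (IG.prod IN) IM (⊤ : ℕ∞) (fun p : G × N => p.1 • f p.2) :=
    hρ.comp (contMDiff_fst.prodMk (hf.comp contMDiff_snd))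
  let Φ := (Diffeomorph.smul (M := G) IG IG (⊤ : ℕ∞) g⁻¹).prodCongr (Diffeomorph.refl IN N (⊤ : ℕ∞))
  have hΦ : Φ (g, p) = (1, p) := by simp [Φ]
  have hequivariant : (fun p : G × N => p.1 • f p.2) =
      Diffeomorph.smul IG IM (⊤ : ℕ∞) g ∘ (fun p : G × N => p.1 • f p.2) ∘ Φ := by
    ext; simp [Φ, smul_smul]
  rw [hequivariant]
  refine Diffeomorph.surjective_mfderiv_comp_comp _ Φ (by simp) ?_ ?_ <;> rw [hΦ]
  exacts [hF.mdifferentiableAt (by simp), h p]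

/-- Let `G` be a Lie group acting smoothly on `M` via `ρ`, let `f : N → M`
be smooth, and set `F : G × N → M`, `F (g, p) = g • f p`.  If `F` is a submersion at every
point of the form `(1, p)` with `p : N` (`1` the identity of `G`), then `F` is a submersion
at every point `(g, p)` of `G × N`. -/
theorem submersion_everywhere_of_submersion_at_identity
    {EG HG : Type*} [NormedAddCommGroup EG] [NormedSpace ℝ EG] [TopologicalSpace HG]
    (IG : ModelWithCorners ℝ EG HG)
    {G : Type*} [TopologicalSpace G] [ChartedSpace HG G] [Group G] [LieGroup IG (⊤ : ℕ∞) G]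
    {EM HM : Type*} [NormedAddCommGroup EM] [NormedSpace ℝ EM] [TopologicalSpace HM]
    (IM : ModelWithCorners ℝ EM HM)
    {M : Type*} [TopologicalSpace M] [ChartedSpace HM M] [IsManifold IM (⊤ : ℕ∞) M]
    {EN HN : Type*} [NormedAddCommGroup EN] [NormedSpace ℝ EN] [TopologicalSpace HN]
    (IN : ModelWithCorners ℝ EN HN)
    {N : Type*} [TopologicalSpace N] [ChartedSpace HN N] [IsManifold IN (⊤ : ℕ∞) N]
    [MulAction G M]
    (hρ : ContMDiff (IG.prod IM) IM (⊤ : ℕ∞) (fun p : G × M => p.1 • p.2))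
    (f : N → M) (hf : ContMDiff IN IM (⊤ : ℕ∞) f)
    (h : ∀ p : N,
      Function.Surjective
        (mfderiv (IG.prod IN) IM (fun p : G × N => p.1 • f p.2) ((1 : G), p))) :
    ∀ q : G × N,
      Function.Surjective (mfderiv (IG.prod IN) IM (fun p : G × N => p.1 • f p.2) q) :=
  submersion_everywhere_of_submersion_at_identity_general IG IM IN hρ f hf h
end

section
/- Let Y ↪ Z be a relatively T1 embedding of topological spaces: for every open U ⊆ Y and every z ∈ Z \ U there exists an open W ⊆ Z with U ⊆ W and z ∉ W. If a compact subset K ⊆ Z is contained in the union of an increasing sequence of subspaces each of whose inclusions into the next is relatively T1, with Z the colimit, then K is contained in some finite stage. -/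
/-!
If `K` meets every complement `Z \ A n`, pick `x n ∈ K \ A n`; the set `S` of these points
meets each stage in finitely many points. Relative T1 lets one enlarge a relatively open subset
of `A n` to one of `A (n + 1)` while still avoiding any given finite set, so starting from `A m`
and avoiding `S \ A m` stage by stage produces an open `U ⊇ A m` of `Z` with `U ∩ S ⊆ A m`.
Finitely many of these cover the compact set `K ⊇ S`, which puts all of `S` into one stage `A M`,
contradicting `x M ∉ A M`.
-/

/-- An inclusion of subspaces `A ⊆ B` (of an ambient space `Z`) is relatively T1 if for
every subset `U ⊆ A` which is open in `A` and every `z ∈ B \ U`, there is a subset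
`W ⊆ B`, open in `B`, with `U ⊆ W` and `z ∉ W`. -/
def RelativelyT1Incl {Z : Type*} [TopologicalSpace Z] (A B : Set Z) : Prop :=
  ∀ U ⊆ A, IsOpen ((↑·) ⁻¹' U : Set A) →
    ∀ z ∈ B \ U, ∃ W ⊆ B, IsOpen ((↑·) ⁻¹' W : Set B) ∧ U ⊆ W ∧ z ∉ W

open Set

lemma finite_range_inter_of_forall_notMem {α : Type*} {A : ℕ → Set α} (hmono : Monotone A)
    {x : ℕ → α} (hx : ∀ n, x n ∉ A n) (n : ℕ) : (range x ∩ A n).Finite := by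
  refine ((finite_Iio n).image x).subset ?_
  rintro _ ⟨⟨k, rfl⟩, hk⟩
  exact ⟨k, mem_Iio.2 (lt_of_not_ge fun hnk => hx k (hmono hnk hk)), rfl⟩

lemma exists_seq_of_forall_exists_succ {α : Type*} (P : ℕ → α → Prop) (r : α → α → Prop)
    {a : α} (h0 : P 0 a) (hstep : ∀ n a, P n a → ∃ b, P (n + 1) b ∧ r a b) :
    ∃ f : ℕ → α, f 0 = a ∧ ∀ n, P n (f n) ∧ r (f n) (f (n + 1)) := by
  choose g hgP hgr using hstep
  let f : ∀ n, {b // P n b} :=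
    fun n => Nat.rec ⟨a, h0⟩ (fun n b => ⟨g n b.1 b.2, hgP n b.1 b.2⟩) n
  exact ⟨fun n => (f n).1, rfl, fun n => ⟨(f n).2, hgr n (f n).1 (f n).2⟩⟩

section Filtration

variable {Z : Type*} [TopologicalSpace Z]

lemma isOpen_preimage_val_of_subset {P Q W : Set Z} (hPQ : P ⊆ Q)
    (hW : IsOpen ((↑·) ⁻¹' W : Set Q)) : IsOpen ((↑·) ⁻¹' W : Set P) :=
  hW.preimage (continuous_inclusion hPQ)

lemma RelativelyT1Incl.exists_superset_disjoint {A B : Set Z} (h : RelativelyT1Incl A B)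
    (hAB : A ⊆ B) {W E : Set Z} (hWA : W ⊆ A) (hWo : IsOpen ((↑·) ⁻¹' W : Set A))
    (hE : (E ∩ B).Finite) (hWE : Disjoint W E) :
    ∃ W' ⊆ B, IsOpen ((↑·) ⁻¹' W' : Set B) ∧ W ⊆ W' ∧ Disjoint W' E := by
  have hsep : ∀ e ∈ E ∩ B, ∃ V ⊆ B, IsOpen ((↑·) ⁻¹' V : Set B) ∧ W ⊆ V ∧ e ∉ V :=
    fun e he => h W hWA hWo e ⟨he.2, hWE.notMem_of_mem_right he.1⟩
  choose! V _ hVo hWV heV using hsep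
  refine ⟨B ∩ ⋂ e ∈ E ∩ B, V e, inter_subset_left, ?_,
    subset_inter (hWA.trans hAB) (subset_iInter₂ hWV), ?_⟩
  · rw [preimage_inter, Subtype.coe_preimage_self, univ_inter, preimage_iInter₂]
    exact hE.isOpen_biInter hVo
  · rw [disjoint_left]
    rintro e ⟨heB, he⟩ heE
    exact heV e ⟨heE, heB⟩ (mem_iInter₂.1 he e ⟨heE, heB⟩)

variable {A : ℕ → Set Z} (hmono : Monotone A)
  (hfinal : ∀ U : Set Z, IsOpen U ↔ ∀ n, IsOpen ((↑·) ⁻¹' U : Set (A n)))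
include hmono hfinal

lemma isOpen_iUnion_of_filtration {W : ℕ → Set Z} (hW : Monotone W) (m : ℕ)
    (hWo : ∀ k, IsOpen ((↑·) ⁻¹' W k : Set (A (m + k)))) : IsOpen (⋃ k, W k) := by
  refine (hfinal _).2 fun p => ?_
  have htail : ⋃ k, W (k + p) = ⋃ k, W k := hW.iSup_nat_add p
  rw [← htail, preimage_iUnion]
  exact isOpen_iUnion fun k => isOpen_preimage_val_of_subset (hmono (by omega)) (hWo (k + p))

variable (hrelT1 : ∀ n, RelativelyT1Incl (A n) (A (n + 1)))
include hrelT1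

lemma exists_isOpen_superset_disjoint_of_filtration {D : Set Z} (hD : ∀ n, (D ∩ A n).Finite)
    {m : ℕ} {W : Set Z} (hWA : W ⊆ A m) (hWo : IsOpen ((↑·) ⁻¹' W : Set (A m)))
    (hWD : Disjoint W D) : ∃ U, IsOpen U ∧ W ⊆ U ∧ Disjoint U D := by
  obtain ⟨V, hV0, hV⟩ := exists_seq_of_forall_exists_succ
    (fun k V => V ⊆ A (m + k) ∧ IsOpen ((↑·) ⁻¹' V : Set (A (m + k))) ∧ Disjoint V D)
    (· ⊆ ·) ⟨hWA, hWo, hWD⟩ fun k V ⟨hVA, hVo, hVD⟩ =>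
      ((hrelT1 (m + k)).exists_superset_disjoint (hmono (m + k).le_succ) hVA hVo (hD _)
        hVD).imp fun _ ⟨hA, ho, hsub, hd⟩ => ⟨⟨hA, ho, hd⟩, hsub⟩
  have hVmono : Monotone V := monotone_nat_of_le_succ fun k => (hV k).2
  exact ⟨⋃ k, V k, isOpen_iUnion_of_filtration hmono hfinal hVmono m fun k => (hV k).1.2.1,
    hV0 ▸ subset_iUnion V 0, disjoint_iUnion_left.2 fun k => (hV k).1.2.2⟩

lemma exists_isOpen_superset_inter_subset_of_filtration {S : Set Z}
    (hS : ∀ n, (S ∩ A n).Finite) (m : ℕ) : ∃ U, IsOpen U ∧ A m ⊆ U ∧ U ∩ S ⊆ A m := by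
  obtain ⟨U, hUo, hAU, hUD⟩ := exists_isOpen_superset_disjoint_of_filtration hmono hfinal hrelT1
    (D := S \ A m) (fun n => (hS n).subset (inter_subset_inter_left _ sdiff_subset)) subset_rfl
    (by rw [Subtype.coe_preimage_self]; exact isOpen_univ) disjoint_sdiff_right
  exact ⟨U, hUo, hAU, fun z ⟨hzU, hzS⟩ =>
    by_contra fun hzA => hUD.notMem_of_mem_left hzU ⟨hzS, hzA⟩⟩

end Filtration

/-- Let `Z` be the colimit (increasing union with the final topology) of
an increasing sequence of subspaces `A 0 ⊆ A 1 ⊆ ⋯` such that each inclusion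
`A n ⊆ A (n+1)` is relatively T1.  Then every compact subset `K ⊆ Z` is contained in some
finite stage `A n`. -/
theorem compact_subset_finite_stage_of_relativelyT1_filtration
    {Z : Type*} [TopologicalSpace Z] (A : ℕ → Set Z)
    (hmono : Monotone A) (hunion : (⋃ n, A n) = Set.univ)
    (hfinal : ∀ U : Set Z, IsOpen U ↔ ∀ n, IsOpen ((↑·) ⁻¹' U : Set (A n)))
    (hrelT1 : ∀ n, RelativelyT1Incl (A n) (A (n + 1)))
    (K : Set Z) (hK : IsCompact K) :
    ∃ n, K ⊆ A n := by
  by_contra! hKA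
  choose x hxK hxA using fun n => not_subset.1 (hKA n)
  choose U hUo hAU hUS using exists_isOpen_superset_inter_subset_of_filtration hmono hfinal
    hrelT1 (finite_range_inter_of_forall_notMem hmono hxA)
  have hcover : K ⊆ ⋃ m, U m := fun z _ => iUnion_mono hAU (hunion ▸ mem_univ z)
  obtain ⟨t, ht⟩ := hK.elim_finite_subcover U hUo hcover
  set M := t.sup id
  obtain ⟨m, hmt, hxm⟩ := mem_iUnion₂.1 (ht (hxK M))
  exact hxA M (hmono (Finset.le_sup (f := id) hmt) (hUS m ⟨hxm, mem_range_self M⟩))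
end

section
/- If X × ∂Δⁿ → Y is a continuous map and Z is the pushout of X × Δⁿ ← X × ∂Δⁿ → Y in topological spaces, then the canonical map Y → Z is a relatively T1 embedding: it is a closed embedding, and for every open U ⊆ Y and every z ∈ Z ∖ U there is an open W ⊆ Z with U ⊆ W and z ∉ W. -/
/-!
An open set of the pushout `Z = A ⊔_S B` of `f : S → A` and `g : S → B` is the same as a pair of
open sets `V ⊆ A`, `U ⊆ B` with `f⁻¹ V = g⁻¹ U`. So to separate a point `inl a` from `inr '' U`
it suffices to extend `g⁻¹ U` to an open `V ⊆ A` avoiding `a`, which is what relative T1-ness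
of `f` provides; and for `f` a closed embedding, `inr` is a closed embedding since
`inl⁻¹ (inr '' C) = f '' (g⁻¹ C)`. The inclusion `X × ∂Δⁿ → X × Δⁿ` is relatively T1 because
`∂Δⁿ` is an intersection of open sets: a point `p` of the interior is avoided by the open set
`⋃ i, {q | q i < p i}` containing `∂Δⁿ`.
-/

open CategoryTheory Limits Topology

noncomputable section

/-- The topological simplex as in the older Mathlib (removed since). -/
def SimplexCategory.toTopObj (x : SimplexCategory) : Set (Fin (x.len + 1) → NNReal) :=
  { f | ∑ i, f i = 1 }

instance (x : SimplexCategory) : CoeFun x.toTopObj fun _ => Fin (x.len + 1) → NNReal :=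
  ⟨fun f => (f : Fin (x.len + 1) → NNReal)⟩

def topSimplexBoundary (n : ℕ) : Set ((SimplexCategory.mk n).toTopObj) :=
  {p | ∃ i, p i = 0}

-- Only the separation condition: being an embedding is stated separately.
def IsRelativelyT1 {Y Z : Type*} [TopologicalSpace Y] [TopologicalSpace Z] (i : Y → Z) : Prop :=
  ∀ U : Set Y, IsOpen U → ∀ z, z ∉ i '' U → ∃ W : Set Z, IsOpen W ∧ i '' U ⊆ W ∧ z ∉ W

namespace IsRelativelyT1

variable {Y Z : Type*} [TopologicalSpace Y] [TopologicalSpace Z] {i : Y → Z}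

lemma of_isInducing (hi : IsInducing i)
    (hrange : ∀ z ∉ Set.range i, ∃ W : Set Z, IsOpen W ∧ Set.range i ⊆ W ∧ z ∉ W) :
    IsRelativelyT1 i := by
  intro U hU z hz
  obtain ⟨U₀, hU₀, rfl⟩ := hi.isOpen_iff.1 hU
  have hsub : i '' (i ⁻¹' U₀) ⊆ U₀ := Set.image_preimage_subset i U₀
  by_cases hzi : z ∈ Set.range i
  · obtain ⟨y, rfl⟩ := hzi
    exact ⟨U₀, hU₀, hsub, fun hy => hz ⟨y, hy, rfl⟩⟩
  · obtain ⟨W, hW, hiW, hzW⟩ := hrange z hzi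
    exact ⟨U₀ ∩ W, hU₀.inter hW,
      Set.subset_inter hsub ((Set.image_subset_range i _).trans hiW), fun h => hzW h.2⟩

lemma exists_isOpen_preimage_eq (hT1 : IsRelativelyT1 i) (hi : IsInducing i) {U : Set Y}
    (hU : IsOpen U) {z : Z} (hz : z ∉ i '' U) :
    ∃ V : Set Z, IsOpen V ∧ i ⁻¹' V = U ∧ z ∉ V := by
  obtain ⟨W, hW, hUW, hzW⟩ := hT1 U hU z hz
  obtain ⟨U₀, hU₀, rfl⟩ := hi.isOpen_iff.1 hU
  refine ⟨W ∩ U₀, hW.inter hU₀, ?_, fun h => hzW h.1⟩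
  rw [Set.preimage_inter, Set.inter_eq_right.2 (Set.image_subset_iff.1 hUW)]

end IsRelativelyT1

lemma isRelativelyT1_prodMap_id_subtypeVal {X T : Type*} [TopologicalSpace X]
    [TopologicalSpace T] {s : Set T}
    (hs : ∀ t ∉ s, ∃ W : Set T, IsOpen W ∧ s ⊆ W ∧ t ∉ W) :
    IsRelativelyT1 (Prod.map id Subtype.val : X × s → X × T) := by
  refine .of_isInducing (IsInducing.id.prodMap IsInducing.subtypeVal) fun ⟨x, t⟩ hxt => ?_
  obtain ⟨W, hW, hsW, htW⟩ := hs t fun ht => hxt ⟨(x, ⟨t, ht⟩), rfl⟩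
  refine ⟨Prod.snd ⁻¹' W, hW.preimage continuous_snd, ?_, htW⟩
  rintro _ ⟨⟨x', t'⟩, rfl⟩
  exact hsW t'.2

universe u

namespace TopCat

variable {S A B : TopCat.{u}} (f : S ⟶ A) (g : S ⟶ B)

lemma pushout_isOpen_iff (W : Set (pushout f g : TopCat)) :
    IsOpen W ↔ IsOpen (pushout.inl f g ⁻¹' W) ∧ IsOpen (pushout.inr f g ⁻¹' W) := by
  refine (colimit_isOpen_iff (span f g) W).trans
    ⟨fun h => ⟨h WalkingSpan.left, h WalkingSpan.right⟩, fun ⟨hl, hr⟩ j => ?_⟩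
  rcases j with (_ | _ | _)
  · rw [← colimit.w (span f g) WalkingSpan.Hom.fst]
    exact hl.preimage f.hom.continuous
  · exact hl
  · exact hr

lemma exists_isOpen_preimage_pushout_inl_inr {V : Set A} {U : Set B} (hV : IsOpen V)
    (hU : IsOpen U) (h : f ⁻¹' V = g ⁻¹' U) :
    ∃ W : Set (pushout f g : TopCat), IsOpen W ∧
      pushout.inl f g ⁻¹' W = V ∧ pushout.inr f g ⁻¹' W = U := by
  -- Open sets are continuous maps to the Sierpiński space `Prop`, and those glue along `f`, `g`.
  let χV : A ⟶ TopCat.of (ULift.{u} Prop) :=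
    ofHom ⟨fun a => ULift.up (a ∈ V), continuous_uliftUp.comp (continuous_Prop.2 hV)⟩
  let χU : B ⟶ TopCat.of (ULift.{u} Prop) :=
    ofHom ⟨fun b => ULift.up (b ∈ U), continuous_uliftUp.comp (continuous_Prop.2 hU)⟩
  have hχ : f ≫ χV = g ≫ χU := by
    ext s
    simp [χV, χU, ← Set.mem_preimage, h]
  let χ := pushout.desc χV χU hχ
  refine ⟨{z | (χ z).down}, continuous_Prop.1 (continuous_uliftDown.comp χ.hom.continuous),
    ?_, ?_⟩
  · ext a
    exact Iff.of_eq (congrArg ULift.down (ConcreteCategory.congr_hom (pushout.inl_desc χV χU hχ) a))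
  · ext b
    exact Iff.of_eq (congrArg ULift.down (ConcreteCategory.congr_hom (pushout.inr_desc χV χU hχ) b))

lemma exists_pushout_inl_or_inr (z : (pushout f g : TopCat)) :
    (∃ a, pushout.inl f g a = z) ∨ ∃ b, pushout.inr f g b = z :=
  Types.eq_or_eq_of_isPushout ((IsPushout.of_hasPushout f g).map (forget TopCat)) z

lemma pushout_inl_eq_inr_iff (hf : Function.Injective f) (a : A) (b : B) :
    pushout.inl f g a = pushout.inr f g b ↔ ∃ s, f s = a ∧ g s = b :=
  Types.pushoutCocone_inl_eq_inr_iff_of_isColimit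
    ((IsPushout.of_hasPushout f g).map (forget TopCat)).isColimit hf a b

lemma pushout_inr_injective (hf : Function.Injective f) :
    Function.Injective (pushout.inr f g) :=
  Types.pushoutCocone_inr_injective_of_isColimit
    ((IsPushout.of_hasPushout f g).map (forget TopCat)).isColimit hf

lemma pushout_inl_preimage_inr_image (hf : Function.Injective f) (C : Set B) :
    pushout.inl f g ⁻¹' (pushout.inr f g '' C) = f '' (g ⁻¹' C) := by
  ext a
  constructor
  · rintro ⟨b, hb, hba⟩
    obtain ⟨s, rfl, rfl⟩ := (pushout_inl_eq_inr_iff f g hf a b).1 hba.symm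
    exact ⟨s, hb, rfl⟩
  · rintro ⟨s, hs, rfl⟩
    exact ⟨g s, hs, ((pushout_inl_eq_inr_iff f g hf _ _).2 ⟨s, rfl, rfl⟩).symm⟩

theorem pushout_inr_isClosedEmbedding (hf : IsClosedEmbedding f) :
    IsClosedEmbedding (pushout.inr f g) := by
  have hinj := pushout_inr_injective f g hf.injective
  refine .of_continuous_injective_isClosedMap (pushout.inr f g).hom.continuous hinj
    fun C hC => ?_
  rw [← isOpen_compl_iff, pushout_isOpen_iff, Set.preimage_compl, Set.preimage_compl,
    isOpen_compl_iff, isOpen_compl_iff, pushout_inl_preimage_inr_image f g hf.injective,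
    hinj.preimage_image]
  exact ⟨hf.isClosedMap _ (hC.preimage g.hom.continuous), hC⟩

theorem isRelativelyT1_pushout_inr (hf : IsEmbedding f) (hT1 : IsRelativelyT1 f) :
    IsRelativelyT1 (pushout.inr f g) := by
  intro U hU z hz
  have hgU : IsOpen (g ⁻¹' U) := hU.preimage g.hom.continuous
  rcases exists_pushout_inl_or_inr f g z with ⟨a, rfl⟩ | ⟨b, rfl⟩
  · have ha : a ∉ f '' (g ⁻¹' U) := by
      rw [← pushout_inl_preimage_inr_image f g hf.injective]
      exact hz
    obtain ⟨V, hV, hVU, haV⟩ := hT1.exists_isOpen_preimage_eq hf.isInducing hgU ha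
    obtain ⟨W, hW, hWV, hWU⟩ := exists_isOpen_preimage_pushout_inl_inr f g hV hU hVU
    refine ⟨W, hW, by rw [Set.image_subset_iff, hWU], fun h => haV ?_⟩
    rw [← hWV]
    exact h
  · obtain ⟨V, hV, hVU⟩ := hf.isInducing.isOpen_iff.1 hgU
    obtain ⟨W, hW, hWV, hWU⟩ := exists_isOpen_preimage_pushout_inl_inr f g hV hU hVU
    refine ⟨W, hW, by rw [Set.image_subset_iff, hWU], fun h => hz ⟨b, ?_, rfl⟩⟩
    rw [← hWU]
    exact h

end TopCat

lemma isClosed_topSimplexBoundary (n : ℕ) : IsClosed (topSimplexBoundary n) := by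
  simp only [topSimplexBoundary, Set.ofPred_exists]
  exact isClosed_iUnion_of_finite fun i =>
    isClosed_eq ((continuous_apply i).comp continuous_subtype_val) continuous_const

lemma exists_isOpen_superset_topSimplexBoundary {n : ℕ} {p : (SimplexCategory.mk n).toTopObj}
    (hp : p ∉ topSimplexBoundary n) :
    ∃ W, IsOpen W ∧ topSimplexBoundary n ⊆ W ∧ p ∉ W := by
  refine ⟨⋃ i, {q | q i < p i}, isOpen_iUnion fun i =>
    isOpen_lt ((continuous_apply i).comp continuous_subtype_val) continuous_const, ?_, ?_⟩
  · rintro q ⟨i, hi⟩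
    have hpi : p i ≠ 0 := fun h => hp ⟨i, h⟩
    exact Set.mem_iUnion.2 ⟨i, show q i < p i by rw [hi]; exact pos_iff_ne_zero.2 hpi⟩
  · simp

/-- If `X × ∂Δⁿ → Y` is a continuous map and `Z` is the pushout of
`X × Δⁿ ← X × ∂Δⁿ → Y` in topological spaces, then the canonical map `Y → Z` is a
relatively T1 embedding: it is a closed embedding, and for every open `U ⊆ Y` and every
`z ∈ Z` not in the image of `U` there is an open `W ⊆ Z` containing the image of `U` but
not `z`. -/
theorem pushout_inr_closedEmbedding_and_relativelyT1 (n : ℕ) (X Y : TopCat)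
    (ι : TopCat.of (X × (topSimplexBoundary n : Set _)) ⟶
      TopCat.of (X × (SimplexCategory.mk n).toTopObj))
    (hι : ∀ q : X × (topSimplexBoundary n : Set _), ι q = ((q.1, q.2.1) : X × (SimplexCategory.mk n).toTopObj))
    (g : TopCat.of (X × (topSimplexBoundary n : Set _)) ⟶ Y) :
    IsClosedEmbedding (⇑(pushout.inr ι g)) ∧
      ∀ U : Set Y, IsOpen U →
        ∀ z : (pushout ι g : TopCat), z ∉ ⇑(pushout.inr ι g) '' U →
          ∃ W : Set (pushout ι g : TopCat),
            IsOpen W ∧ ⇑(pushout.inr ι g) '' U ⊆ W ∧ z ∉ W := by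
  have hι' : ⇑ι = Prod.map id Subtype.val := funext hι
  have hclosed : IsClosedEmbedding ι := hι' ▸
    IsClosedEmbedding.id.prodMap (isClosed_topSimplexBoundary n).isClosedEmbedding_subtypeVal
  have hT1 : IsRelativelyT1 ι :=
    hι' ▸ isRelativelyT1_prodMap_id_subtypeVal fun _ => exists_isOpen_superset_topSimplexBoundary
  exact ⟨TopCat.pushout_inr_isClosedEmbedding ι g hclosed,
    TopCat.isRelativelyT1_pushout_inr ι g hclosed.isEmbedding hT1⟩

end
end
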